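/- Each of the three holomorphic vector fields X⁸, X⁹, X¹⁰ is an infinitesimal CR automorphism of M_LC: for every i ∈ {8, 9, 10} and every point p = (z₁, z₂, w) ∈ M_LC one has Re( Xⁱ₁(p)·(−conj(z₁) − z₁·conj(z₂)) + Xⁱ₂(p)·(−Re(w)·conj(z₂) − ½·conj(z₁)²) + Xⁱ₃(p)·(1 − z₂·conj(z₂))/2 ) = 0, i.e. the real vector field Xⁱ + conj(Xⁱ) is tangent to M_LC at p. -/
import Mathlib


open Complex ComplexConjugate

noncomputable section

/-- The tube over the future light cone, in coordinates `(z₁, z₂, w)`: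
`Re w · (1 − z₂ z̄₂) = z₁ z̄₁ + Re (z₁² z̄₂)`, away from `z₂ z̄₂ = 1`. -/
def MLC : Set (ℂ × ℂ × ℂ) :=
  {p | p.2.1 * conj p.2.1 ≠ 1 ∧
    ((p.2.2.re : ℂ) * (1 - p.2.1 * conj p.2.1)
      = p.1 * conj p.1 + (((p.1 ^ 2 * conj p.2.1).re : ℂ)))}

/-- The three holomorphic vector fields `X⁸, X⁹, X¹⁰` on `ℂ³`, indexed here by `Fin 3`. -/
def Yfield : Fin 3 → (ℂ × ℂ × ℂ → ℂ × ℂ × ℂ) :=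
  ![fun p => (I * p.2.2 * p.1, -I * p.1 ^ 2, I * p.2.2 ^ 2),
    fun p => (p.1 ^ 2 - p.2.2 * p.2.1 - p.2.2, 2 * p.1 * p.2.1 + 2 * p.1, 2 * p.2.2 * p.1),
    fun p => (-I * p.1 ^ 2 + I * p.2.2 * p.2.1 - I * p.2.2,
      -2 * I * p.1 * p.2.1 + 2 * I * p.1, -2 * I * p.2.2 * p.1)]

lemma re_eq_zero_of_add_conj (z : ℂ) (h : z + conj z = 0) : z.re = 0 := by
  have := Complex.add_conj z
  rw [h] at this
  have h2 : (2 : ℝ) * z.re = 0 := by exact_mod_cast this.symm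
  linarith

/-- Each of `X⁸, X⁹, X¹⁰` is an infinitesimal CR automorphism of the model `M_LC`:
the real field `Xⁱ + conj Xⁱ` is tangent to `M_LC` at every point. -/
theorem Yfield_tangent_MLC (i : Fin 3) (p : ℂ × ℂ × ℂ) (hp : p ∈ MLC) :
    ((Yfield i p).1 * (-(conj p.1) - p.1 * conj p.2.1)
      + (Yfield i p).2.1 * (-(p.2.2.re : ℂ) * conj p.2.1 - (1 / 2) * (conj p.1) ^ 2)
      + (Yfield i p).2.2 * (1 - p.2.1 * conj p.2.1) / 2).re = 0 := by
  obtain ⟨z1, z2, w⟩ := p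
  obtain ⟨-, h⟩ := hp
  simp only at h
  have hw : ((w.re : ℝ) : ℂ) = (w + conj w) / 2 := by
    rw [Complex.add_conj]; push_cast; ring
  have hq : (((z1 ^ 2 * conj z2).re : ℝ) : ℂ)
      = (z1 ^ 2 * conj z2 + conj (z1 ^ 2 * conj z2)) / 2 := by
    rw [Complex.add_conj]; push_cast; ring
  rw [hw, hq] at h
  simp only [map_add, map_mul, map_sub, map_pow, Complex.conj_conj] at h
  apply re_eq_zero_of_add_conj
  have hi : i = 0 ∨ i = 1 ∨ i = 2 := by omega
  rcases hi with rfl | rfl | rfl <;>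
    simp only [Yfield, Matrix.cons_val_zero, Matrix.cons_val_one, Matrix.head_cons,
      Matrix.cons_val_two, Matrix.tail_cons] <;>
    rw [hw] <;>
    simp only [map_add, map_mul, map_sub, map_neg, map_div₀, map_pow, map_one, map_ofNat,
      Complex.conj_conj, Complex.conj_I, Complex.conj_ofReal]
  · linear_combination (Complex.I * (w - conj w)) * h
  · linear_combination (2 * (z1 + conj z1)) * h
  · linear_combination (-2 * Complex.I * (z1 - conj z1)) * h
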